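/- arXiv:1402.4464 — 5 statements merged into one kernel-verified Lean document; each statement's English description precedes it below -/
import Mathlib

section
/- Let p be a prime with p ≡ 3 (mod 8) and p - 1 = 2q where q is prime. Then the only solution x ∈ {1,...,p-1} to x^x ≡ x (mod p) is x = 1. -/
theorem only_trivial_fixed_point_special (p q : ℕ) (hp : p.Prime) (hq : q.Prime)
    (h8 : p % 8 = 3) (hpq : p - 1 = 2 * q) :
    ∀ x : ℕ, 1 ≤ x → x ≤ p - 1 → x ^ x ≡ x [MOD p] → x = 1 := by
  haveI : Fact p.Prime := ⟨hp⟩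
  have hq2 : 2 ≤ q := hq.two_le
  have hp3 : 3 ≤ p := by omega
  have hqodd : q % 2 = 1 := by
    by_contra h
    have h2 : 2 ∣ q := by omega
    rcases hq.eq_one_or_self_of_dvd 2 h2 with h' | h' <;> omega
  intro x hx1 hxp hfix
  by_contra hne
  have hxlt : x < p := by omega
  have hx0 : (x : ZMod p) ≠ 0 := by
    intro h
    have := (ZMod.natCast_eq_zero_iff x p).mp h
    have := Nat.le_of_dvd (by omega) this
    omega
  have hcast : ((x : ZMod p)) ^ x = (x : ZMod p) := by
    have h := (ZMod.natCast_eq_natCast_iff _ _ _).mpr hfix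
    push_cast at h
    exact h
  have hpow : (x : ZMod p) ^ (x - 1) = 1 := by
    apply mul_right_cancel₀ hx0
    rw [one_mul, ← pow_succ]
    have he : x - 1 + 1 = x := by omega
    rw [he, hcast]
  set d := orderOf (x : ZMod p) with hd
  have hd1 : d ∣ x - 1 := orderOf_dvd_of_pow_eq_one hpow
  have hd2 : d ∣ 2 * q := by
    rw [← hpq]
    exact orderOf_dvd_of_pow_eq_one (ZMod.pow_card_sub_one_eq_one hx0)
  by_cases hqd : q ∣ d
  · obtain ⟨k, hk⟩ := dvd_trans hqd hd1
    have hklt : k < 2 := by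
      by_contra hge
      have : q * 2 ≤ q * k := Nat.mul_le_mul_left q (by omega)
      omega
    have hxq : x = q + 1 := by interval_cases k <;> omega
    have hdq : d ∣ q := by rwa [hxq, Nat.add_sub_cancel] at hd1
    have hdodd : d % 2 = 1 := by
      by_contra h2
      have hdne : d ≠ 0 := by
        intro h0; rw [h0] at hdq
        have := Nat.eq_zero_of_zero_dvd hdq; omega
      have h2' : 2 ∣ d := by omega
      have : 2 ∣ q := h2'.trans hdq
      omega
    have hsq : IsSquare (x : ZMod p) := by
      refine ⟨(x : ZMod p) ^ ((d + 1) / 2), ?_⟩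
      rw [← pow_add]
      have he : (d + 1) / 2 + (d + 1) / 2 = d + 1 := by omega
      rw [he, pow_succ, hd, pow_orderOf_eq_one, one_mul]
    have h2x : (x : ZMod p) * 2 = 1 := by
      have he : x * 2 = p + 1 := by omega
      calc (x : ZMod p) * 2 = ((x * 2 : ℕ) : ZMod p) := by push_cast; ring
        _ = ((p + 1 : ℕ) : ZMod p) := by rw [he]
        _ = 1 := by push_cast [ZMod.natCast_self]; ring
    have h2inv : (x : ZMod p)⁻¹ = 2 := inv_eq_of_mul_eq_one_right h2x
    have hsq2 : IsSquare (2 : ZMod p) := by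
      obtain ⟨y, hy⟩ := hsq
      exact ⟨y⁻¹, by rw [← h2inv, hy, mul_inv]⟩
    have := (ZMod.exists_sq_eq_two_iff (by omega : p ≠ 2)).mp hsq2
    omega
  · have hd2' : d ∣ 2 := (Nat.Coprime.dvd_of_dvd_mul_right
      (Nat.Coprime.symm ((Nat.Prime.coprime_iff_not_dvd hq).mpr hqd)) hd2)
    have hx2 : (x : ZMod p) ^ 2 = 1 := orderOf_dvd_iff_pow_eq_one.mp hd2'
    have hfac : ((x : ZMod p) - 1) * ((x : ZMod p) + 1) = 0 := by
      linear_combination hx2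
    rcases mul_eq_zero.mp hfac with h | h
    · have hx1' : (x : ZMod p) = ((1 : ℕ) : ZMod p) := by push_cast; exact sub_eq_zero.mp h
      have h1 : x % p = 1 % p := (ZMod.natCast_eq_natCast_iff _ _ _).mp hx1'
      rw [Nat.mod_eq_of_lt hxlt, Nat.mod_eq_of_lt (by omega)] at h1
      omega
    · have hxm : (x : ZMod p) = -1 := eq_neg_of_add_eq_zero_left h
      have hodd : Odd (x - 1) := by
        have hc : (x : ZMod p) = ((p - 1 : ℕ) : ZMod p) := by
          rw [hxm, Nat.cast_sub (by omega), ZMod.natCast_self]; ring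
        have h1 : x % p = (p - 1) % p := (ZMod.natCast_eq_natCast_iff _ _ _).mp hc
        rw [Nat.mod_eq_of_lt hxlt, Nat.mod_eq_of_lt (by omega)] at h1
        rw [Nat.odd_iff]; omega
      rw [hxm, hodd.neg_one_pow] at hpow
      have h20 : ((2 : ℕ) : ZMod p) = 0 := by push_cast; linear_combination -hpow
      have := Nat.le_of_dvd (by omega) ((ZMod.natCast_eq_zero_iff 2 p).mp h20)
      omega
end

section
/- Let p and q be primes with q dividing p-1, and set a = (p-1)/q. For any β ∈ {1,...,q-1}, the integer x = 1 + aβ satisfies x^(x-1) ≡ ((q-β)·q^{-1})^{β(p-1)/q} (mod p), where q^{-1} denotes the inverse of q modulo p. In particular, if (q-β)/q is a q-th power modulo p, then x = 1 + aβ is a nontrivial fixed point of the map x ↦ x^x mod p. -/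
theorem fixed_point_construction (p q : ℕ) (hp : p.Prime) (hq : q.Prime)
    (hdvd : q ∣ p - 1) (a : ℕ) (ha : a = (p - 1) / q)
    (β : ℕ) (hβ1 : 1 ≤ β) (hβq : β ≤ q - 1) :
    (((1 + a * β : ℕ) : ZMod p) ^ (a * β)
        = (((q - β : ℕ) : ZMod p) * (q : ZMod p)⁻¹) ^ (β * ((p - 1) / q))) ∧
    ((∃ y : ZMod p, y ^ q = ((q - β : ℕ) : ZMod p) * (q : ZMod p)⁻¹) →
      (1 + a * β) ^ (1 + a * β) ≡ 1 + a * β [MOD p]) := by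
  haveI : Fact p.Prime := ⟨hp⟩
  have hp2 : 2 ≤ p := hp.two_le
  have hq2 : 2 ≤ q := hq.two_le
  have hqp : q ≤ p - 1 := Nat.le_of_dvd (by omega) hdvd
  have haq : a * q = p - 1 := by rw [ha]; exact Nat.div_mul_cancel hdvd
  have hq0 : (q : ZMod p) ≠ 0 := by
    rw [Ne, ZMod.natCast_eq_zero_iff]
    intro h
    have := Nat.le_of_dvd (by omega) h
    omega
  have hnat : (1 + a * β) * q = (q - β) + p * β := by
    have h1 : (1 + a * β) * q = q + (p - 1) * β := by
      rw [add_mul, one_mul, mul_right_comm, haq]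
    have h2 : (p - 1) * β = p * β - β := by rw [Nat.sub_mul, one_mul]
    have h3 : β ≤ p * β := Nat.le_mul_of_pos_left β (by omega)
    omega
  have hcast : ((1 + a * β : ℕ) : ZMod p) * (q : ZMod p) = ((q - β : ℕ) : ZMod p) := by
    rw [← Nat.cast_mul, hnat, Nat.cast_add, Nat.cast_mul, ZMod.natCast_self, zero_mul,
      add_zero]
  have hbase : ((1 + a * β : ℕ) : ZMod p) = ((q - β : ℕ) : ZMod p) * (q : ZMod p)⁻¹ := by
    rw [eq_mul_inv_iff_mul_eq₀ hq0]; exact hcast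
  have hexp : β * ((p - 1) / q) = a * β := by rw [ha, mul_comm]
  constructor
  · rw [← hbase, hexp]
  · rintro ⟨y, hy⟩
    have hsub0 : ((q - β : ℕ) : ZMod p) ≠ 0 := by
      rw [Ne, ZMod.natCast_eq_zero_iff]
      intro h
      have := Nat.le_of_dvd (by omega) h
      omega
    have hy0 : y ≠ 0 := by
      intro h
      rw [h, zero_pow hq.ne_zero] at hy
      exact hsub0 (by
        have := hy.symm
        field_simp at this
        simp [this])
    have hx1 : ((1 + a * β : ℕ) : ZMod p) ^ (a * β) = 1 := by
      calc ((1 + a * β : ℕ) : ZMod p) ^ (a * β)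
          = (y ^ q) ^ (a * β) := by rw [hy, hbase]
        _ = (y ^ (p - 1)) ^ β := by
            rw [← pow_mul, ← pow_mul, ← mul_assoc, mul_comm q a, haq]
        _ = 1 := by rw [ZMod.pow_card_sub_one_eq_one hy0, one_pow]
    have : (((1 + a * β) ^ (1 + a * β) : ℕ) : ZMod p) = ((1 + a * β : ℕ) : ZMod p) := by
      rw [Nat.cast_pow, pow_add, pow_one, hx1, mul_one]
    exact (ZMod.natCast_eq_natCast_iff _ _ _).mp this
end

section
/- Let p, q be primes with q | p-1. If there exists n ∈ {1,...,q-1} such that n·q^{-1} is a q-th power modulo p, then the congruence x^(x-1) ≡ 1 (mod p) has a solution with x ∈ {2,...,p-1}, namely x = 1 + ((p-1)/q)(q-n). -/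
theorem solution_from_qth_power (p q : ℕ) (hp : p.Prime) (hq : q.Prime)
    (hdvd : q ∣ p - 1) (n : ℕ) (hn1 : 1 ≤ n) (hnq : n ≤ q - 1)
    (hpow : ∃ y : ZMod p, y ^ q = (n : ZMod p) * (q : ZMod p)⁻¹) :
    2 ≤ 1 + ((p - 1) / q) * (q - n) ∧ 1 + ((p - 1) / q) * (q - n) ≤ p - 1 ∧
      (1 + ((p - 1) / q) * (q - n)) ^ ((1 + ((p - 1) / q) * (q - n)) - 1) ≡ 1 [MOD p] := by
  haveI : Fact p.Prime := ⟨hp⟩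
  obtain ⟨y, hy⟩ := hpow
  set m := (p - 1) / q with hm
  have hq2 := hq.two_le
  have hp2 := hp.two_le
  have hqle : q ≤ p - 1 := Nat.le_of_dvd (by omega) hdvd
  have hp3 : 3 ≤ p := by omega
  have hmq : m * q = p - 1 := Nat.div_mul_cancel hdvd
  have hm1 : 1 ≤ m := (Nat.one_le_div_iff hq.pos).mpr hqle
  have hqn : 1 ≤ q - n := by omega
  have hb1 : 2 ≤ 1 + m * (q - n) := by nlinarith
  have hb2 : 1 + m * (q - n) ≤ p - 1 := by
    have h1 : m * (q - n) ≤ m * (q - 1) := Nat.mul_le_mul_left m (by omega)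
    have h2 : m * (q - 1) = m * q - m := by rw [Nat.mul_sub, Nat.mul_one]
    omega
  refine ⟨hb1, hb2, ?_⟩
  have hx1 : 1 + m * (q - n) - 1 = m * (q - n) := by omega
  rw [hx1, ← ZMod.natCast_eq_natCast_iff]
  rw [Nat.cast_pow, Nat.cast_add, Nat.cast_mul, Nat.cast_one]
  have hqne : (q : ZMod p) ≠ 0 := by
    rw [Ne, ZMod.natCast_eq_zero_iff]
    intro h
    have := Nat.le_of_dvd (by omega) h
    omega
  have hnne : (n : ZMod p) ≠ 0 := by
    rw [Ne, ZMod.natCast_eq_zero_iff]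
    intro h
    have := Nat.le_of_dvd (by omega) h
    omega
  have hyne : y ≠ 0 := by
    intro h
    rw [h, zero_pow hq.ne_zero] at hy
    exact (mul_ne_zero hnne (inv_ne_zero hqne)) hy.symm
  have hqinv : (q : ZMod p) * (q : ZMod p)⁻¹ = 1 :=
    ZMod.mul_inv_of_unit _ (isUnit_iff_ne_zero.mpr hqne)
  have hmqz : (m : ZMod p) * q = -1 := by
    have h : ((m * q : ℕ) : ZMod p) = ((p - 1 : ℕ) : ZMod p) := by rw [hmq]
    rw [Nat.cast_mul, Nat.cast_sub (by omega : 1 ≤ p), ZMod.natCast_self] at h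
    simpa using h
  have hmz : (m : ZMod p) = -(q : ZMod p)⁻¹ := by
    calc (m : ZMod p) = m * ((q : ZMod p) * (q : ZMod p)⁻¹) := by rw [hqinv, mul_one]
      _ = ((m : ZMod p) * q) * (q : ZMod p)⁻¹ := by ring
      _ = -(q : ZMod p)⁻¹ := by rw [hmqz]; ring
  have hxz : (1 : ZMod p) + (m : ZMod p) * ((q - n : ℕ) : ZMod p) = y ^ q := by
    rw [hy, Nat.cast_sub (by omega : n ≤ q), mul_sub, hmqz, hmz]
    ring
  rw [hxz, ← pow_mul, show q * (m * (q - n)) = (q * m) * (q - n) by ring, pow_mul,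
    show q * m = p - 1 by rw [Nat.mul_comm]; exact hmq,
    ZMod.pow_card_sub_one_eq_one hyne, one_pow]
end

section
/- Let q be a prime, d = π(q-1), x_0 ∈ F_q, and N_q = #{v ∈ F_q^d : L_n(v) ≠ x_0 for all n ∈ {1,...,q-1}}, where L_n is the linear form given by the exponent vector of n. Then N_q ≤ q^d − M·q^{d-1} + (M choose 2)·q^{d-2}, where M is the number of square-free integers in {2,...,q-1}. -/
/-!
Write `A n` for the hyperplane `L n v = x₀`. A vector counted by `Nq` lies in none of the
`A n` with `n` square-free in `[2, q - 1]`, so `Nq ≤ q ^ d - #⋃ A n`, and the Bonferroni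
inequality `#⋃ A n ≥ ∑ #A n - ∑_{m < n} #(A m ∩ A n)` reduces the claim to counting solutions
of linear equations. A square-free `n ≥ 2` has exponent `1` at its least prime factor, so
`L n` has a unit coefficient and `#A n = q ^ (d - 1)`. Two distinct square-free numbers differ
in a prime `p` dividing only one of them, say `m`; the coefficients of `L m` and `L n` at `p`
and at the least prime factor of `n` form an identity minor, so `#(A m ∩ A n) = q ^ (d - 2)`.
-/

open Finset

namespace Finset

variable {ι α : Type*} [DecidableEq α]

lemma sum_card_eq_sum_card_filter_mem {s : Finset ι} {U : Finset α} {A : ι → Finset α}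
    (hA : ∀ i ∈ s, A i ⊆ U) : ∑ i ∈ s, #(A i) = ∑ x ∈ U, #{i ∈ s | x ∈ A i} := by
  calc ∑ i ∈ s, #(A i) = ∑ i ∈ s, ∑ x ∈ U, if x ∈ A i then 1 else 0 := by
        refine sum_congr rfl fun i hi => ?_
        rw [sum_boole, filter_mem_eq_inter, inter_eq_right.2 (hA i hi), Nat.cast_id]
    _ = ∑ x ∈ U, #{i ∈ s | x ∈ A i} := by
        rw [sum_comm]
        simp only [sum_boole, Nat.cast_id]

theorem sum_card_le_card_biUnion_add_sum_card_inter [LinearOrder ι]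
    (s : Finset ι) (A : ι → Finset α) :
    ∑ i ∈ s, #(A i) ≤
      #(s.biUnion A) + ∑ p ∈ s ×ˢ s with p.1 < p.2, #(A p.1 ∩ A p.2) := by
  have hA : ∀ i ∈ s, A i ⊆ s.biUnion A := fun i hi => subset_biUnion_of_mem A hi
  have hAA : ∀ p ∈ {p ∈ s ×ˢ s | p.1 < p.2}, A p.1 ∩ A p.2 ⊆ s.biUnion A := fun p hp =>
    inter_subset_left.trans (hA _ (mem_product.1 (mem_filter.1 hp).1).1)
  rw [sum_card_eq_sum_card_filter_mem hA, sum_card_eq_sum_card_filter_mem hAA,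
    card_eq_sum_ones (s.biUnion A), ← sum_add_distrib]
  refine sum_le_sum fun x hx => ?_
  set T := {i ∈ s | x ∈ A i}
  have hpairs :
      {p ∈ {p ∈ s ×ˢ s | p.1 < p.2} | x ∈ A p.1 ∩ A p.2} = {p ∈ T ×ˢ T | p.1 < p.2} := by
    ext p
    simp only [T, mem_filter, mem_product, mem_inter]
    tauto
  obtain ⟨i, hi, hxi⟩ := mem_biUnion.1 hx
  obtain ⟨k, hk⟩ : ∃ k, #T = k + 1 :=
    Nat.exists_eq_add_one.2 (card_pos.2 ⟨i, mem_filter.2 ⟨hi, hxi⟩⟩)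
  -- `x` lies in `#T = k + 1` of the sets, and `k + 1 ≤ 1 + (k + 1).choose 2`
  rw [hpairs, card_product_filter_lt, hk, Nat.choose_succ_succ', Nat.choose_one_right]
  omega

end Finset

namespace AddMonoidHom

variable {G H : Type*} [AddGroup G] [Fintype G] [AddGroup H] [Fintype H] [DecidableEq H]

lemma card_fiber_eq_card_div {f : G →+ H} (hf : Function.Surjective f) (y : H) :
    #{g | f g = y} = Fintype.card G / Fintype.card H := by
  have hG : Fintype.card G = Fintype.card H * #{g | f g = y} := by
    rw [← card_univ, card_eq_sum_card_fiberwise (f := f) (t := univ) fun _ _ => mem_univ _,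
      sum_congr rfl fun y' _ => card_fiber_eq_of_mem_range f (hf y') (hf y), sum_const,
      card_univ, smul_eq_mul]
  rw [hG, Nat.mul_div_cancel_left _ Fintype.card_pos]

end AddMonoidHom

lemma Nat.card_subtype_le_card_sub_card {α : Type*} [Fintype α] [DecidableEq α] {P : α → Prop}
    {U : Finset α} (h : ∀ v, P v → v ∉ U) :
    Nat.card {v // P v} ≤ Fintype.card α - #U := by
  calc Nat.card {v // P v} ≤ Nat.card ((Uᶜ : Finset α) : Set α) :=
        Nat.card_mono (Set.toFinite _) fun v hv => by simpa using h v hv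
    _ = Fintype.card α - #U := by
        rw [Nat.card_coe_set_eq, Set.ncard_coe_finset, card_compl]

section DotProduct

variable {R ι : Type*} [CommRing R] [Fintype R] [DecidableEq R] [Fintype ι] [DecidableEq ι]

def dotProductAddHom (c : ι → R) : (ι → R) →+ R :=
  AddMonoidHom.mk' (c ⬝ᵥ ·) (dotProduct_add c)

lemma card_filter_dotProduct_eq {c : ι → R} {j : ι} (hj : c j = 1) (x : R) :
    #{v : ι → R | c ⬝ᵥ v = x} = Fintype.card R ^ (Fintype.card ι - 1) := by
  have hf : Function.Surjective (dotProductAddHom c) := fun t =>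
    ⟨Pi.single j t, by simp [dotProductAddHom, dotProduct_single, hj]⟩
  have hι : 1 ≤ Fintype.card ι := Fintype.card_pos_iff.2 ⟨j⟩
  refine ((dotProductAddHom c).card_fiber_eq_card_div hf x).trans ?_
  rw [Fintype.card_fun, ← Nat.pow_div hι Fintype.card_pos, pow_one]

lemma card_filter_dotProduct_eq_and_dotProduct_eq [Nontrivial R] {c c' : ι → R} {j k : ι}
    (hj : c j = 1) (h'j : c' j = 0) (h'k : c' k = 1) (x y : R) :
    #{v : ι → R | c ⬝ᵥ v = x ∧ c' ⬝ᵥ v = y} =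
      Fintype.card R ^ (Fintype.card ι - 2) := by
  set f := (dotProductAddHom c).prod (dotProductAddHom c')
  have hf : Function.Surjective f := fun ⟨s, t⟩ =>
    ⟨Pi.single j (s - c k * t) + Pi.single k t, by
      simp [f, dotProductAddHom, dotProduct_add, dotProduct_single, hj, h'j, h'k]⟩
  have hjk : j ≠ k := by
    rintro rfl
    exact zero_ne_one (h'j.symm.trans h'k)
  have hι : 2 ≤ Fintype.card ι := by
    simpa [card_pair hjk] using card_le_univ {j, k}
  have hfib : #{v : ι → R | c ⬝ᵥ v = x ∧ c' ⬝ᵥ v = y} = #{v | f v = (x, y)} := by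
    simp [f, dotProductAddHom, Prod.ext_iff]
  rw [hfib, f.card_fiber_eq_card_div hf, Fintype.card_fun, Fintype.card_prod, ← sq,
    Nat.pow_div hι Fintype.card_pos]

end DotProduct

noncomputable def exponentVector (R : Type*) [NatCast R] (d n : ℕ) : Fin d → R :=
  fun i => (n.factorization (Nat.nth Nat.Prime i) : R)

lemma exponentVector_count_apply (R : Type*) [NatCast R] {q p : ℕ} (hp : p.Prime)
    (hpq : p < q) (n : ℕ) :
    exponentVector R (Nat.count Nat.Prime q) n
      ⟨Nat.count Nat.Prime p, Nat.count_strict_mono hp hpq⟩ = (n.factorization p : R) := by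
  simp [exponentVector, Nat.nth_count hp]

lemma Nat.exists_prime_dvd_not_dvd_of_squarefree {m n : ℕ} (hm : Squarefree m)
    (hn : Squarefree n) (hmn : m ≠ n) :
    ∃ p, p.Prime ∧ ((p ∣ m ∧ ¬p ∣ n) ∨ (p ∣ n ∧ ¬p ∣ m)) := by
  by_contra! h
  refine hmn ?_
  have : m.primeFactors = n.primeFactors := by
    ext p
    simp only [Nat.mem_primeFactors, hm.ne_zero, hn.ne_zero, ne_eq, not_false_eq_true, and_true,
      and_congr_right_iff]
    intro hp
    exact ⟨(h p hp).1, (h p hp).2⟩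
  rw [← Nat.prod_primeFactors_of_squarefree hm, ← Nat.prod_primeFactors_of_squarefree hn, this]

section ExponentVector

variable {q : ℕ} [NeZero q]

local notation "d" => Nat.count Nat.Prime q

lemma card_filter_exponentVector_dotProduct_eq {n : ℕ} (hn : n ≠ 1) (hnq : n < q)
    (hsq : Squarefree n) (x : ZMod q) :
    #{v : Fin d → ZMod q | exponentVector (ZMod q) d n ⬝ᵥ v = x} = q ^ (d - 1) := by
  have hp := Nat.minFac_prime hn
  have hpq : n.minFac < q := (Nat.minFac_le hsq.ne_zero.bot_lt).trans_lt hnq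
  have hpivot := exponentVector_count_apply (ZMod q) hp hpq n
  rw [Nat.factorization_eq_one_of_squarefree hsq hp n.minFac_dvd, Nat.cast_one] at hpivot
  simpa using card_filter_dotProduct_eq hpivot x

lemma card_filter_exponentVector_dotProduct_eq_and_of_dvd [Fact (1 < q)] {m n p : ℕ} (hmq : m < q)
    (hn : n ≠ 1) (hnq : n < q) (hmsq : Squarefree m) (hnsq : Squarefree n) (hp : p.Prime)
    (hpm : p ∣ m) (hpn : ¬p ∣ n) (x y : ZMod q) :
    #{v : Fin d → ZMod q | exponentVector (ZMod q) d m ⬝ᵥ v = x ∧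
      exponentVector (ZMod q) d n ⬝ᵥ v = y} = q ^ (d - 2) := by
  have hpq : p < q := (Nat.le_of_dvd hmsq.ne_zero.bot_lt hpm).trans_lt hmq
  have hr := Nat.minFac_prime hn
  have hrq : n.minFac < q := (Nat.minFac_le hnsq.ne_zero.bot_lt).trans_lt hnq
  have hj := exponentVector_count_apply (ZMod q) hp hpq m
  have h'j := exponentVector_count_apply (ZMod q) hp hpq n
  have h'k := exponentVector_count_apply (ZMod q) hr hrq n
  rw [Nat.factorization_eq_one_of_squarefree hmsq hp hpm, Nat.cast_one] at hj
  rw [Nat.factorization_eq_zero_of_not_dvd hpn, Nat.cast_zero] at h'j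
  rw [Nat.factorization_eq_one_of_squarefree hnsq hr n.minFac_dvd, Nat.cast_one] at h'k
  simpa using card_filter_dotProduct_eq_and_dotProduct_eq hj h'j h'k x y

lemma card_filter_exponentVector_dotProduct_eq_and [Fact (1 < q)] {m n : ℕ} (hm : m ≠ 1)
    (hn : n ≠ 1) (hmq : m < q) (hnq : n < q) (hmsq : Squarefree m) (hnsq : Squarefree n)
    (hmn : m ≠ n) (x y : ZMod q) :
    #{v : Fin d → ZMod q | exponentVector (ZMod q) d m ⬝ᵥ v = x ∧
      exponentVector (ZMod q) d n ⬝ᵥ v = y} = q ^ (d - 2) := by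
  obtain ⟨p, hp, ⟨hpm, hpn⟩ | ⟨hpn, hpm⟩⟩ :=
    Nat.exists_prime_dvd_not_dvd_of_squarefree hmsq hnsq hmn
  · exact card_filter_exponentVector_dotProduct_eq_and_of_dvd hmq hn hnq hmsq hnsq hp hpm hpn x y
  · simp_rw [and_comm (a := exponentVector (ZMod q) d m ⬝ᵥ _ = x)]
    exact card_filter_exponentVector_dotProduct_eq_and_of_dvd hnq hm hmq hnsq hmsq hp hpn hpm y x

end ExponentVector

theorem Nq_upper_bound (q : ℕ) (hq : q.Prime)
    (d : ℕ) (hd : d = ((Finset.range q).filter Nat.Prime).card)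
    (L : ℕ → (Fin d → ZMod q) → ZMod q)
    (hL : ∀ n v, L n v = ∑ i : Fin d,
      ((Nat.factorization n (Nat.nth Nat.Prime i) : ZMod q) * v i))
    (x₀ : ZMod q)
    (Nq : ℕ)
    (hNq : Nq = Nat.card {v : Fin d → ZMod q // ∀ n ∈ Finset.Icc 1 (q - 1), L n v ≠ x₀})
    (M : ℕ) (hM : M = ((Finset.Icc 2 (q - 1)).filter Squarefree).card) :
    Nq ≤ q ^ d - M * q ^ (d - 1) + M.choose 2 * q ^ (d - 2) := by
  have : NeZero q := ⟨hq.ne_zero⟩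
  have : Fact (1 < q) := ⟨hq.one_lt⟩
  rw [← Nat.count_eq_card_filter_range] at hd
  subst hd
  set d := Nat.count Nat.Prime q
  set S := (Finset.Icc 2 (q - 1)).filter Squarefree
  set A : ℕ → Finset (Fin d → ZMod q) :=
    fun n => {v | exponentVector (ZMod q) d n ⬝ᵥ v = x₀}
  have hS : ∀ n ∈ S, n ≠ 1 ∧ n < q ∧ Squarefree n := fun n hn => by
    simp only [S, mem_filter, mem_Icc] at hn
    exact ⟨by omega, by omega, hn.2⟩
  have hA : ∀ n ∈ S, #(A n) = q ^ (d - 1) := fun n hn =>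
    card_filter_exponentVector_dotProduct_eq (hS n hn).1 (hS n hn).2.1 (hS n hn).2.2 x₀
  have hAA : ∀ p ∈ {p ∈ S ×ˢ S | p.1 < p.2}, #(A p.1 ∩ A p.2) = q ^ (d - 2) := by
    rintro ⟨m, n⟩ hmn
    obtain ⟨⟨hm, hn⟩, hlt⟩ := by simpa only [mem_filter, mem_product] using hmn
    rw [← filter_and]
    exact card_filter_exponentVector_dotProduct_eq_and (hS m hm).1 (hS n hn).1 (hS m hm).2.1
      (hS n hn).2.1 (hS m hm).2.2 (hS n hn).2.2 hlt.ne x₀ x₀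
  have hcover : Nq ≤ Fintype.card (Fin d → ZMod q) - #(S.biUnion A) := by
    rw [hNq]
    refine Nat.card_subtype_le_card_sub_card fun v hv hvU => ?_
    obtain ⟨n, hn, hvn⟩ := mem_biUnion.1 hvU
    obtain ⟨-, hnq, hnsq⟩ := hS n hn
    refine hv n (mem_Icc.2 ⟨hnsq.ne_zero.bot_lt, by omega⟩) ?_
    exact (hL n v).trans (mem_filter.1 hvn).2
  have hbonf := sum_card_le_card_biUnion_add_sum_card_inter S A
  rw [sum_congr rfl hA, sum_congr rfl hAA, sum_const, sum_const, card_product_filter_lt, ← hM,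
    smul_eq_mul, smul_eq_mul] at hbonf
  rw [Fintype.card_fun, ZMod.card, Fintype.card_fin] at hcover
  omega
end

section
/- Let q be an odd prime and ℓ₁ < ℓ₂ primes with ℓ₂ ≤ q. Then Q(ζ_q, ℓ₂^{1/q}) is not contained in Q(ζ_q, ℓ₁^{1/q}); equivalently, ℓ₂^{1/q} ∉ Q(ζ_q, ℓ₁^{1/q}). -/
/-!
Put `K = ℚ(ζ_q)`, `β = ℓ₁^{1/q}` and `α = ℓ₂^{1/q}`. Since `[K : ℚ] = q - 1` is prime to `q`,
a rational number with `p`-adic valuation `1` is not a `q`-th power in `K`; in particular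
`X^q - ℓ₁` is irreducible over `K` and `K(β)/K` is a cyclic Kummer extension. If `α ∈ K(β)`,
Kummer theory gives `α = c βⁱ` with `c ∈ K`, so `c^q = ℓ₂ / ℓ₁ⁱ`, whose `ℓ₂`-adic valuation is `1`.
-/

open Polynomial IntermediateField

theorem pow_ne_of_padicValRat_eq_one {p q : ℕ} [Fact p.Prime] (hq : q ≠ 1) {r : ℚ}
    (hr : padicValRat p r = 1) (s : ℚ) : s ^ q ≠ r := by
  rintro rfl
  rw [padicValRat.pow] at hr
  exact hq (by exact_mod_cast Int.eq_one_of_mul_eq_one_right (Nat.cast_nonneg q) hr)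

theorem padicValRat_div_pow_eq_one {p ℓ : ℕ} [hp : Fact p.Prime] (hpℓ : ¬p ∣ ℓ) (i : ℕ) :
    padicValRat p (p / ℓ ^ i) = 1 := by
  have hℓ : (ℓ : ℚ) ≠ 0 := by rintro h; exact hpℓ (by simp [Nat.cast_eq_zero.mp h])
  rw [padicValRat.div (by exact_mod_cast hp.out.ne_zero) (pow_ne_zero i hℓ),
    padicValRat.self hp.out.one_lt, padicValRat.pow, padicValRat.of_nat,
    padicValNat.eq_zero_of_not_dvd hpℓ]
  simp

theorem dvd_finrank_of_pow_eq_algebraMap {F K : Type*} [Field F] [Field K] [Algebra F K]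
    [FiniteDimensional F K] {q : ℕ} (hq : q.Prime) {r : F} (hr : ∀ s : F, s ^ q ≠ r) {c : K}
    (hc : c ^ q = algebraMap F K r) : q ∣ Module.finrank F K := by
  have hmin : minpoly F c = X ^ q - C r :=
    (minpoly.eq_of_irreducible_of_monic (X_pow_sub_C_irreducible_of_prime hq hr)
      (by simp [hc]) (monic_X_pow_sub_C r hq.ne_zero)).symm
  simpa [hmin, natDegree_X_pow_sub_C] using minpoly.degree_dvd (IsIntegral.of_finite F c)

namespace IsPrimitiveRoot

variable {E : Type*} [Field E] [CharZero E] {ζ : E} {n : ℕ}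

theorem finrank_adjoin_rat (hζ : IsPrimitiveRoot ζ n) (hn : 0 < n) :
    Module.finrank ℚ ℚ⟮ζ⟯ = n.totient := by
  rw [adjoin.finrank (hζ.isIntegral hn).tower_top, ← cyclotomic_eq_minpoly_rat hζ hn,
    natDegree_cyclotomic]

theorem pow_ne_algebraMap_adjoin_rat (hζ : IsPrimitiveRoot ζ n) (hn : n.Prime) {r : ℚ}
    (hr : ∀ s : ℚ, s ^ n ≠ r) (c : ℚ⟮ζ⟯) : c ^ n ≠ algebraMap ℚ ℚ⟮ζ⟯ r := by
  intro hc
  have := adjoin.finiteDimensional (hζ.isIntegral hn.pos).tower_top (K := ℚ)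
  have hdvd := dvd_finrank_of_pow_eq_algebraMap hn hr hc
  rw [hζ.finrank_adjoin_rat hn.pos, Nat.totient_prime hn] at hdvd
  exact Nat.not_dvd_of_pos_of_lt (Nat.sub_pos_of_lt hn.one_lt) (Nat.sub_lt hn.pos one_pos) hdvd

end IsPrimitiveRoot

/-- `α / βⁱ` is fixed by a generator `σ` of the cyclic group `Gal(L/K)`, where `σ α = ζⁱ α`. -/
theorem exists_eq_algebraMap_mul_pow_of_pow_eq {K L : Type*} [Field K] [Field L] [Algebra K L]
    {n : ℕ} [NeZero n] {ζ : K} (hζ : IsPrimitiveRoot ζ n) {a : K} (H : Irreducible (X ^ n - C a))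
    (ha : a ≠ 0) [IsSplittingField K L (X ^ n - C a)] {β : L} (hβ : β ^ n = algebraMap K L a)
    {α : L} {b : K} (hα : α ^ n = algebraMap K L b) :
    ∃ (c : K) (i : ℕ), α = algebraMap K L c * β ^ i := by
  obtain rfl | hα0 := eq_or_ne α 0
  · exact ⟨0, 0, by simp⟩
  have hβ0 : β ≠ 0 := by
    rintro rfl
    exact ha (by simpa [zero_pow (NeZero.ne n)] using hβ.symm)
  have : FiniteDimensional K L := IsSplittingField.finiteDimensional L (X ^ n - C a)
  have : IsGalois K L := isGalois_of_isSplittingField_X_pow_sub_C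
    ⟨ζ, (mem_primitiveRoots (NeZero.pos n)).mpr hζ⟩ H L
  set e := autEquivZmod H L hζ
  set σ := e.symm (Multiplicative.ofAdd 1)
  have hζL : IsPrimitiveRoot (algebraMap K L ζ) n :=
    hζ.map_of_injective (algebraMap K L).injective
  have hσβ : σ β = algebraMap K L ζ * β := by
    simpa [Algebra.smul_def] using autEquivZmod_symm_apply_natCast H L hβ hζ 1
  obtain ⟨i, -, hσα⟩ : ∃ i < n, algebraMap K L ζ ^ i = σ α / α := by
    refine hζL.eq_pow_of_pow_eq_one ?_
    rw [div_pow, ← map_pow, hα, AlgEquiv.commutes, ← hα, div_self (pow_ne_zero n hα0)]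
  have hσ : σ ∈ MulAction.stabilizer Gal(L/K) (α / β ^ i) := by
    rw [MulAction.mem_stabilizer_iff, AlgEquiv.smul_def, map_div₀, map_pow, hσβ, mul_pow,
      (div_eq_iff hα0).mp hσα.symm,
      mul_div_mul_left _ _ (pow_ne_zero i (hζL.ne_zero (NeZero.ne n)))]
  have hfix (τ : Gal(L/K)) : τ (α / β ^ i) = α / β ^ i := by
    have hτ : τ = σ ^ (e τ).toAdd.val := by
      apply e.injective
      rw [map_pow, MulEquiv.apply_symm_apply, ← ofAdd_nsmul, nsmul_one, ZMod.natCast_zmod_val,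
        ofAdd_toAdd]
    rw [hτ]
    exact (MulAction.stabilizer Gal(L/K) (α / β ^ i)).pow_mem hσ _
  obtain ⟨c, hc⟩ := (IsGalois.mem_range_algebraMap_iff_fixed _).mpr hfix
  exact ⟨c, i, by rw [hc, div_mul_cancel₀ _ (pow_ne_zero i hβ0)]⟩

theorem exists_pow_mul_pow_eq_of_mem_adjoin {K E : Type*} [Field K] [Field E] [Algebra K E]
    {n : ℕ} [NeZero n] {ζ : K} (hζ : IsPrimitiveRoot ζ n) {a b : K}
    (H : Irreducible (X ^ n - C a)) (ha : a ≠ 0) {α β : E} (hβ : β ^ n = algebraMap K E a)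
    (hα : α ^ n = algebraMap K E b) (hmem : α ∈ K⟮β⟯) :
    ∃ (c : K) (i : ℕ), c ^ n * a ^ i = b := by
  set M := adjoin K ((X ^ n - C a).rootSet E)
  have hsplits : ((X ^ n - C a).map (algebraMap K E)).Splits := by
    simpa using X_pow_sub_C_splits_of_isPrimitiveRoot
      (hζ.map_of_injective (algebraMap K E).injective) hβ
  have := adjoin_rootSet_isSplittingField hsplits
  have hβM : β ∈ M := subset_adjoin _ _ (by
    rw [mem_rootSet_of_ne (X_pow_sub_C_ne_zero (NeZero.pos n) a)]
    simp [hβ])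
  have hαM : α ∈ M := adjoin_simple_le_iff.mpr hβM hmem
  obtain ⟨c, i, hc⟩ := exists_eq_algebraMap_mul_pow_of_pow_eq (L := M) hζ H ha
    (β := ⟨β, hβM⟩) (Subtype.ext hβ) (α := ⟨α, hαM⟩) (Subtype.ext hα)
  have hc' : α = algebraMap K E c * β ^ i := congrArg Subtype.val hc
  refine ⟨c, i, (algebraMap K E).injective ?_⟩
  rw [← hα, hc', map_mul, map_pow, map_pow, ← hβ, mul_pow, ← pow_mul, ← pow_mul, mul_comm i n]

theorem qth_root_not_in_kummer_general (q ℓ₁ ℓ₂ : ℕ) (hq : q.Prime)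
    (hℓ₁ : ℓ₁.Prime) (hℓ₂ : ℓ₂.Prime) (hlt : ℓ₁ < ℓ₂) :
    (((ℓ₂ : ℝ) ^ ((q : ℝ)⁻¹) : ℝ) : ℂ) ∉
      ℚ⟮(Complex.exp (2 * Real.pi * Complex.I / q)),
        (((ℓ₁ : ℝ) ^ ((q : ℝ)⁻¹) : ℝ) : ℂ)⟯ := by
  set ζ := Complex.exp (2 * Real.pi * Complex.I / q)
  set K := ℚ⟮ζ⟯
  have : NeZero q := ⟨hq.ne_zero⟩
  have hζ : IsPrimitiveRoot (⟨ζ, mem_adjoin_simple_self ℚ ζ⟩ : K) q := by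
    rw [← IsPrimitiveRoot.coe_submonoidClass_iff]
    exact Complex.isPrimitiveRoot_exp q hq.ne_zero
  have hroot (ℓ : ℕ) : (((ℓ : ℝ) ^ ((q : ℝ)⁻¹) : ℝ) : ℂ) ^ q = algebraMap K ℂ ℓ := by
    rw [← Complex.ofReal_pow, Real.rpow_inv_natCast_pow (Nat.cast_nonneg ℓ) hq.ne_zero]
    simp
  have hnot_pow {p ℓ : ℕ} (hp : p.Prime) (hℓ : ℓ.Prime) (hne : p ≠ ℓ) (i : ℕ) (c : K) :
      c ^ q ≠ algebraMap ℚ K (p / ℓ ^ i) :=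
    have : Fact p.Prime := ⟨hp⟩
    (Complex.isPrimitiveRoot_exp q hq.ne_zero).pow_ne_algebraMap_adjoin_rat hq
      (pow_ne_of_padicValRat_eq_one hq.ne_one
        (padicValRat_div_pow_eq_one ((Nat.prime_dvd_prime_iff_eq hp hℓ).not.mpr hne) i)) c
  have hirr : Irreducible (X ^ q - C (ℓ₁ : K)) :=
    X_pow_sub_C_irreducible_of_prime hq fun c hc ↦
      hnot_pow hℓ₁ hℓ₂ hlt.ne 0 c (by simpa using hc)
  have hℓ₁K : (ℓ₁ : K) ≠ 0 := Nat.cast_ne_zero.mpr hℓ₁.ne_zero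
  intro hmem
  rw [← adjoin_simple_adjoin_simple] at hmem
  obtain ⟨c, i, hc⟩ := exists_pow_mul_pow_eq_of_mem_adjoin hζ hirr hℓ₁K (hroot ℓ₁) (hroot ℓ₂) hmem
  refine hnot_pow hℓ₂ hℓ₁ hlt.ne' i c ?_
  rw [map_div₀, map_pow, map_natCast, map_natCast, ← hc,
    mul_div_cancel_right₀ _ (pow_ne_zero i hℓ₁K)]

theorem qth_root_not_in_kummer (q ℓ₁ ℓ₂ : ℕ) (hq : q.Prime) (hqodd : Odd q)
    (hℓ₁ : ℓ₁.Prime) (hℓ₂ : ℓ₂.Prime) (hlt : ℓ₁ < ℓ₂) (hle : ℓ₂ ≤ q) :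
    (((ℓ₂ : ℝ) ^ ((q : ℝ)⁻¹) : ℝ) : ℂ) ∉
      ℚ⟮(Complex.exp (2 * Real.pi * Complex.I / q)),
        (((ℓ₁ : ℝ) ^ ((q : ℝ)⁻¹) : ℝ) : ℂ)⟯ :=
  qth_root_not_in_kummer_general q ℓ₁ ℓ₂ hq hℓ₁ hℓ₂ hlt
end
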